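/- arXiv:1309.1794 — 2 statements merged into one kernel-verified Lean document; each statement's English description precedes it below -/
import Mathlib

section
/- Let X ⊆ ℝⁿ be a convex set, f : ℝⁿ → ℝⁿ continuously differentiable, C ∈ ℝ^{p×n}, θ > 0, and P ∈ ℝ^{n×n} symmetric positive definite such that P·J(x) + J(x)ᵀ·P ⪯ θ·CᵀC for all x ∈ X, where J(x) is the Jacobian of f at x. Then for any a, b ∈ X, (b − a)ᵀ·P·(f(b) − f(a)) ≤ (θ/2)·|C·(b − a)|², where |·| is the Euclidean norm on ℝᵖ. -/
open Matrix

/-! Along the segment from `a` to `b`, the derivative of `s ↦ (b - a)ᵀ P f(a + s (b - a))` is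
`(b - a)ᵀ P J (b - a)`, which for symmetric `P` is half the quadratic form of `P J + Jᵀ P`; the
matrix inequality bounds it by `(θ/2) |C (b - a)|²`, and the one-dimensional mean value
inequality on `[0, 1]` concludes. -/

theorem Convex.sub_le_of_hasFDerivAt_apply_le {E : Type*} [NormedAddCommGroup E]
    [NormedSpace ℝ E] {X : Set E} (hX : Convex ℝ X) {g : E → ℝ} {g' : E → E →L[ℝ] ℝ}
    (hg : ∀ z ∈ X, HasFDerivAt g (g' z) z) {a b : E} (ha : a ∈ X) (hb : b ∈ X) {K : ℝ}
    (hK : ∀ z ∈ X, g' z (b - a) ≤ K) : g b - g a ≤ K := by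
  have hline : ∀ t ∈ Set.Icc (0 : ℝ) 1,
      HasDerivAt (g ∘ AffineMap.lineMap a b) (g' (AffineMap.lineMap a b t) (b - a)) t :=
    fun t ht => (hg _ (hX.lineMap_mem ha hb ht)).comp_hasDerivAt t AffineMap.hasDerivAt_lineMap
  have := (convex_Icc (0 : ℝ) 1).image_sub_le_mul_sub_of_deriv_le
    (fun t ht => (hline t ht).continuousAt.continuousWithinAt)
    (fun t ht => (hline t (interior_subset ht)).differentiableAt.differentiableWithinAt)
    (fun t ht => (hline t (interior_subset ht)).deriv ▸
      hK _ (hX.lineMap_mem ha hb (interior_subset ht)))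
    0 (by simp) 1 (by simp) zero_le_one
  simpa using this

theorem Convex.apply_sub_le_of_hasFDerivAt {E F : Type*} [NormedAddCommGroup E]
    [NormedSpace ℝ E] [NormedAddCommGroup F] [NormedSpace ℝ F] {X : Set E} (hX : Convex ℝ X)
    {f : E → F} {f' : E → E →L[ℝ] F} (hf : ∀ z ∈ X, HasFDerivAt f (f' z) z) (ℓ : F →L[ℝ] ℝ)
    {a b : E} (ha : a ∈ X) (hb : b ∈ X) {K : ℝ} (hK : ∀ z ∈ X, ℓ (f' z (b - a)) ≤ K) :
    ℓ (f b - f a) ≤ K := by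
  rw [map_sub]
  exact hX.sub_le_of_hasFDerivAt_apply_le (fun z hz => ℓ.hasFDerivAt.comp z (hf z hz)) ha hb hK

theorem Matrix.IsSymm.dotProduct_mul_add_transpose_mul_mulVec {ι R : Type*} [Fintype ι]
    [CommSemiring R] {P : Matrix ι ι R} (hP : P.IsSymm) (M : Matrix ι ι R) (v : ι → R) :
    v ⬝ᵥ ((P * M + Mᵀ * P) *ᵥ v) = 2 * (v ⬝ᵥ (P *ᵥ (M *ᵥ v))) := by
  have hsymm : v ⬝ᵥ ((Mᵀ * P) *ᵥ v) = v ⬝ᵥ (P *ᵥ (M *ᵥ v)) := by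
    rw [← mulVec_mulVec, dotProduct_mulVec, vecMul_transpose, dotProduct_comm (M *ᵥ v)]
    conv_rhs => rw [dotProduct_mulVec, ← mulVec_transpose, hP.eq]
  rw [add_mulVec, dotProduct_add, ← mulVec_mulVec, hsymm, two_mul]

theorem incremental_quadratic_bound_general
    {n p : ℕ}
    (X : Set (Fin n → ℝ)) (hX : Convex ℝ X)
    (f : (Fin n → ℝ) → (Fin n → ℝ))
    (J : (Fin n → ℝ) → Matrix (Fin n) (Fin n) ℝ)
    (hf : ∀ z, HasFDerivAt f ((J z).mulVecLin.toContinuousLinearMap) z)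
    (C : Matrix (Fin p) (Fin n) ℝ)
    (θ : ℝ)
    (P : Matrix (Fin n) (Fin n) ℝ) (hP : P.PosDef)
    (hLMI : ∀ z ∈ X, ∀ v : Fin n → ℝ,
      v ⬝ᵥ ((P * J z + (J z)ᵀ * P) *ᵥ v) ≤ θ * ((C *ᵥ v) ⬝ᵥ (C *ᵥ v)))
    (a b : Fin n → ℝ) (ha : a ∈ X) (hb : b ∈ X) :
    (b - a) ⬝ᵥ (P *ᵥ (f b - f a)) ≤
      (θ / 2) * ((C *ᵥ (b - a)) ⬝ᵥ (C *ᵥ (b - a))) := by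
  have hPsymm : P.IsSymm := hP.1
  let ℓ : (Fin n → ℝ) →L[ℝ] ℝ :=
    (dotProductBilin ℝ ℝ (b - a) ∘ₗ P.mulVecLin).toContinuousLinearMap
  refine hX.apply_sub_le_of_hasFDerivAt (fun z _ => hf z) ℓ ha hb fun z hz => ?_
  have h := hLMI z hz (b - a)
  rw [hPsymm.dotProduct_mul_add_transpose_mul_mulVec (J z)] at h
  change (b - a) ⬝ᵥ (P *ᵥ (J z *ᵥ (b - a))) ≤ _
  linarith

/-- The incremental dissipation inequality: if
`P J(x) + J(x)ᵀ P ⪯ θ CᵀC` on a convex set `X` (with `P` symmetric positive definite,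
`θ > 0`), then for all `a, b ∈ X`,
`(b - a)ᵀ P (f(b) - f(a)) ≤ (θ/2) |C (b - a)|²`. -/
theorem incremental_quadratic_bound
    {n p : ℕ}
    (X : Set (Fin n → ℝ)) (hX : Convex ℝ X)
    (f : (Fin n → ℝ) → (Fin n → ℝ))
    (J : (Fin n → ℝ) → Matrix (Fin n) (Fin n) ℝ)
    (hf : ∀ z, HasFDerivAt f ((J z).mulVecLin.toContinuousLinearMap) z)
    (hJcont : Continuous J)
    (C : Matrix (Fin p) (Fin n) ℝ)
    (θ : ℝ) (hθ : 0 < θ)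
    (P : Matrix (Fin n) (Fin n) ℝ) (hP : P.PosDef)
    (hLMI : ∀ z ∈ X, ∀ v : Fin n → ℝ,
      v ⬝ᵥ ((P * J z + (J z)ᵀ * P) *ᵥ v) ≤ θ * ((C *ᵥ v) ⬝ᵥ (C *ᵥ v)))
    (a b : Fin n → ℝ) (ha : a ∈ X) (hb : b ∈ X) :
    (b - a) ⬝ᵥ (P *ᵥ (f b - f a)) ≤
      (θ / 2) * ((C *ᵥ (b - a)) ⬝ᵥ (C *ᵥ (b - a))) :=
  incremental_quadratic_bound_general X hX f J hf C θ P hP hLMI a b ha hb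
end

section
/- Let G be an undirected connected graph on nodes 1,…,N with graph Laplacian second-smallest eigenvalue λ₂ > 0, let f, B, C satisfy the Assumption (OFP), and let xᵢ, kᵢⱼ be a continuously differentiable solution of the adaptively coupled system with xᵢ(t) ∈ X for all t in an interval [0,T). Fix any constant k* with 2·k*·λ₂ − θ > 0, set k*ᵢⱼ = k* if i,j are adjacent in G and k*ᵢⱼ = 0 otherwise, and define V(t) = ∑_{i=1}^N x̃ᵢ(t)ᵀ·P·x̃ᵢ(t) + ∑_{i=1}^N ∑_{j=1}^N (1/(2γᵢⱼ))·(kᵢⱼ(t) − k*ᵢⱼ)² (terms with non-adjacent i,j interpreted as zero). Then V is differentiable on [0,T) and satisfies V̇(t) ≤ −(2·k*·λ₂ − θ)·∑_{i=1}^N |ỹᵢ(t)|² for all t ∈ [0,T). -/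
/-!
Differentiating `V`, the consensus part contributes `2 ∑ᵢ x̃ᵢᵀ P ẋᵢ` (the mean drops out since
`∑ᵢ x̃ᵢ = 0`). Splitting `f(xᵢ) = (f(xᵢ) - f(x̄)) + f(x̄)`, the mean value theorem along the
segment `[x̄, xᵢ] ⊆ X` and the (OFP) inequality bound the first piece by `θ |ỹᵢ|²`; the second
cancels after summation. Since `P B = Cᵀ`, the coupling contributes `2 ∑ᵢ ỹᵢ ⬝ ∑ⱼ kᵢⱼ (ỹⱼ - ỹᵢ)`,
which by symmetry of `k` equals `-∑ᵢⱼ kᵢⱼ |yᵢ - yⱼ|²` and is cancelled exactly by the `kᵢⱼ`-part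
of the derivative of the gain term. What remains is `θ ∑ |ỹᵢ|² - k* ∑_{i ~ j} |yᵢ - yⱼ|²`, and
since each coordinate of `(ỹᵢ)ᵢ` sums to zero, hence is orthogonal to the kernel of the Laplacian
of the connected graph, the last sum is at least `2 λ₂ ∑ |ỹᵢ|²`.
-/

open Matrix

section

variable {ι κ : Type*} [Fintype ι] [Fintype κ] {t : ℝ}

theorem dotProduct_mulVec_comm_of_transpose_eq {P : Matrix ι ι ℝ} (hP : Pᵀ = P) (v w : ι → ℝ) :
    v ⬝ᵥ (P *ᵥ w) = w ⬝ᵥ (P *ᵥ v) := by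
  rw [dotProduct_mulVec, ← mulVec_transpose, hP, dotProduct_comm]

theorem sum_sub_mean_eq_zero {E : Type*} [AddCommGroup E] [Module ℝ E] {N : ℕ} (x : Fin N → E) :
    ∑ i, (x i - (N : ℝ)⁻¹ • ∑ j, x j) = 0 := by
  rcases Nat.eq_zero_or_pos N with rfl | hN
  · simp
  · rw [Finset.sum_sub_distrib, Finset.sum_const, Finset.card_univ, Fintype.card_fin,
      ← Nat.cast_smul_eq_nsmul ℝ, smul_smul, mul_inv_cancel₀ (by positivity), one_smul, sub_self]

theorem dotProduct_eq_sum_orthonormalBasis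
    (b : OrthonormalBasis ι ℝ (EuclideanSpace ℝ ι)) (v w : ι → ℝ) :
    v ⬝ᵥ w = ∑ i, (v ⬝ᵥ b i) * (b i ⬝ᵥ w) := by
  simpa [EuclideanSpace.inner_eq_star_dotProduct, dotProduct_comm] using
    (b.sum_inner_mul_inner (WithLp.toLp 2 v) (WithLp.toLp 2 w)).symm

theorem Matrix.IsHermitian.mul_dotProduct_self_le_of_forall_eigenvalue
    [DecidableEq ι] {A : Matrix ι ι ℝ} (hA : A.IsHermitian) {l : ℝ}
    (hl : ∀ μ : ℝ, (∃ v : ι → ℝ, v ≠ 0 ∧ A *ᵥ v = μ • v) → μ = 0 ∨ l ≤ μ)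
    {v : ι → ℝ} (hv : ∀ w, A *ᵥ w = 0 → w ⬝ᵥ v = 0) :
    l * (v ⬝ᵥ v) ≤ v ⬝ᵥ (A *ᵥ v) := by
  -- Expand `v` in an orthonormal eigenbasis; by `hv` it has no component along eigenvalue `0`.
  set b := hA.eigenvectorBasis
  have hAb : ∀ i, b i ⬝ᵥ (A *ᵥ v) = hA.eigenvalues i * (b i ⬝ᵥ v) := fun i => by
    rw [dotProduct_mulVec, ← mulVec_transpose, ← conjTranspose_eq_transpose_of_trivial, hA.eq,
      hA.mulVec_eigenvectorBasis, smul_dotProduct, smul_eq_mul]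
  rw [dotProduct_eq_sum_orthonormalBasis b v v, dotProduct_eq_sum_orthonormalBasis b v,
    Finset.mul_sum]
  refine Finset.sum_le_sum fun i _ => ?_
  rw [hAb, dotProduct_comm v]
  have hb : (b i : ι → ℝ) ≠ 0 := fun h => b.orthonormal.ne_zero i (by ext j; exact congrFun h j)
  rcases hl (hA.eigenvalues i) ⟨b i, hb, hA.mulVec_eigenvectorBasis i⟩ with hμ | hμ
  · have : b i ⬝ᵥ v = 0 := hv _ (by rw [hA.mulVec_eigenvectorBasis, hμ, zero_smul])
    simp [this]
  · nlinarith [mul_self_nonneg (b i ⬝ᵥ v)]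

theorem Matrix.PosSemidef.nonneg_of_mulVec_eq_smul {A : Matrix ι ι ℝ} (hA : A.PosSemidef)
    {v : ι → ℝ} (hv : v ≠ 0) {μ : ℝ} (h : A *ᵥ v = μ • v) : 0 ≤ μ := by
  have := hA.dotProduct_mulVec_nonneg v
  rw [star_trivial, h, dotProduct_smul, smul_eq_mul] at this
  exact nonneg_of_mul_nonneg_left this (by simpa using dotProduct_self_star_pos_iff.mpr hv)

theorem HasDerivAt.dotProduct {u v : ℝ → ι → ℝ} {u' v' : ι → ℝ}
    (hu : HasDerivAt u u' t) (hv : HasDerivAt v v' t) :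
    HasDerivAt (fun s => u s ⬝ᵥ v s) (u' ⬝ᵥ v t + u t ⬝ᵥ v') t := by
  have := HasDerivAt.fun_sum (u := Finset.univ) fun i _ =>
    (hasDerivAt_pi.mp hu i).mul (hasDerivAt_pi.mp hv i)
  rwa [Finset.sum_add_distrib] at this

theorem HasDerivAt.mulVec (A : Matrix κ ι ℝ) {v : ℝ → ι → ℝ} {v' : ι → ℝ}
    (hv : HasDerivAt v v' t) : HasDerivAt (fun s => A *ᵥ v s) (A *ᵥ v') t :=
  A.mulVecLin.toContinuousLinearMap.hasFDerivAt.comp_hasDerivAt t hv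

theorem HasDerivAt.one_div_two_mul_mul_sub_sq {k : ℝ → ℝ} {γ q : ℝ} (hk : HasDerivAt k (γ * q) t)
    (hγ : γ ≠ 0) (c : ℝ) :
    HasDerivAt (fun s => 1 / (2 * γ) * (k s - c) ^ 2) ((k t - c) * q) t := by
  refine (((hk.sub_const c).fun_pow 2).const_mul (1 / (2 * γ))).congr_deriv ?_
  field_simp
  ring

theorem hasDerivAt_sum_sub_mean_dotProduct_mulVec {N : ℕ} {P : Matrix ι ι ℝ} (hP : Pᵀ = P)
    {x : Fin N → ℝ → ι → ℝ} {x' : Fin N → ι → ℝ} (hx : ∀ i, HasDerivAt (x i) (x' i) t) :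
    HasDerivAt (fun s => ∑ i, (x i s - (N : ℝ)⁻¹ • ∑ j, x j s) ⬝ᵥ
        (P *ᵥ (x i s - (N : ℝ)⁻¹ • ∑ j, x j s)))
      (2 * ∑ i, (x i t - (N : ℝ)⁻¹ • ∑ j, x j t) ⬝ᵥ (P *ᵥ x' i)) t := by
  set mean' := (N : ℝ)⁻¹ • ∑ j, x' j
  have hu (i : Fin N) : HasDerivAt (fun s => x i s - (N : ℝ)⁻¹ • ∑ j, x j s) (x' i - mean') t :=
    (hx i).sub ((HasDerivAt.fun_sum fun j _ => hx j).fun_const_smul _)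
  refine (HasDerivAt.fun_sum fun i _ => (hu i).dotProduct ((hu i).mulVec P)).congr_deriv ?_
  have hmean : ∑ i, (x i t - (N : ℝ)⁻¹ • ∑ j, x j t) ⬝ᵥ (P *ᵥ mean') = 0 := by
    rw [← sum_dotProduct, sum_sub_mean_eq_zero, zero_dotProduct]
  rw [← sub_zero (∑ i, _ ⬝ᵥ (P *ᵥ x' i)), ← hmean, ← Finset.sum_sub_distrib, Finset.mul_sum]
  refine Finset.sum_congr rfl fun i _ => ?_
  rw [dotProduct_mulVec_comm_of_transpose_eq hP (x' i - mean'), mulVec_sub, dotProduct_sub]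
  ring

theorem two_mul_sub_dotProduct_mulVec_sub_le {f : (ι → ℝ) → ι → ℝ} {J : (ι → ℝ) → Matrix ι ι ℝ}
    {X : Set (ι → ℝ)} (hf : ∀ z ∈ X, HasFDerivAt f (J z).mulVecLin.toContinuousLinearMap z)
    (hX : Convex ℝ X) {θ : ℝ} {P : Matrix ι ι ℝ} (hP : Pᵀ = P) {C : Matrix κ ι ℝ}
    (hLMI : ∀ z ∈ X, ∀ v : ι → ℝ,
      v ⬝ᵥ ((P * J z + (J z)ᵀ * P) *ᵥ v) ≤ θ * ((C *ᵥ v) ⬝ᵥ (C *ᵥ v)))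
    {a b : ι → ℝ} (ha : a ∈ X) (hb : b ∈ X) :
    2 * ((b - a) ⬝ᵥ (P *ᵥ (f b - f a))) ≤ θ * ((C *ᵥ (b - a)) ⬝ᵥ (C *ᵥ (b - a))) := by
  set w := b - a
  set φ := fun s : ℝ => w ⬝ᵥ (P *ᵥ f (a + s • w))
  have hseg : ∀ s ∈ Set.Icc (0 : ℝ) 1, a + s • w ∈ X := fun s hs => hX.add_smul_sub_mem ha hb hs
  have hφ : ∀ s ∈ Set.Icc (0 : ℝ) 1,
      HasDerivAt φ (w ⬝ᵥ (P *ᵥ (J (a + s • w) *ᵥ w))) s := fun s hs => by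
    have hpath : HasDerivAt (fun s : ℝ => a + s • w) w s := by
      simpa using ((hasDerivAt_id s).smul_const w).const_add a
    exact (hasDerivAt_const s w).dotProduct
      (((hf _ (hseg s hs)).comp_hasDerivAt s hpath).mulVec P) |>.congr_deriv (by simp)
  have hφ_le : ∀ s ∈ Set.Icc (0 : ℝ) 1,
      w ⬝ᵥ (P *ᵥ (J (a + s • w) *ᵥ w)) ≤ θ / 2 * ((C *ᵥ w) ⬝ᵥ (C *ᵥ w)) := fun s hs => by
    have h := hLMI _ (hseg s hs) w
    rw [add_mulVec, dotProduct_add, ← mulVec_mulVec, ← mulVec_mulVec, dotProduct_mulVec w (J _)ᵀ,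
      vecMul_transpose, dotProduct_mulVec_comm_of_transpose_eq hP (J _ *ᵥ w)] at h
    linarith
  -- mean value inequality for `φ` on `[0, 1]`
  have := (convex_Icc (0 : ℝ) 1).image_sub_le_mul_sub_of_deriv_le
    (fun s hs => (hφ s hs).continuousAt.continuousWithinAt)
    (fun s hs => (hφ s (interior_subset hs)).differentiableAt.differentiableWithinAt)
    (fun s hs => (hφ s (interior_subset hs)).deriv ▸ hφ_le s (interior_subset hs))
    0 (by simp) 1 (by simp) zero_le_one
  simp only [φ, one_smul, zero_smul, add_zero, add_sub_cancel, w] at this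
  rw [mulVec_sub, dotProduct_sub]
  linarith

theorem two_mul_sum_dotProduct_sum_smul_sub {k : ι → ι → ℝ} (hk : ∀ i j, k i j = k j i)
    (y : ι → κ → ℝ) :
    2 * ∑ i, y i ⬝ᵥ ∑ j, k i j • (y j - y i) =
      -∑ i, ∑ j, k i j * ((y i - y j) ⬝ᵥ (y i - y j)) := by
  have hswap : ∑ i, ∑ j, k i j * (y j ⬝ᵥ y j) = ∑ i, ∑ j, k i j * (y i ⬝ᵥ y i) := by
    rw [Finset.sum_comm]; simp only [hk]
  have hexpand (i j : ι) : (y i - y j) ⬝ᵥ (y i - y j) =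
      y i ⬝ᵥ y i - 2 * (y i ⬝ᵥ y j) + y j ⬝ᵥ y j := by
    simp only [dotProduct_sub, sub_dotProduct, dotProduct_comm (y j) (y i)]; ring
  calc 2 * ∑ i, y i ⬝ᵥ ∑ j, k i j • (y j - y i)
      = ∑ i, ∑ j, (k i j * (y j ⬝ᵥ y j) - k i j * (y i ⬝ᵥ y i) -
          k i j * ((y i - y j) ⬝ᵥ (y i - y j))) := by
        simp only [Finset.mul_sum, dotProduct_sum]
        refine Finset.sum_congr rfl fun i _ => Finset.sum_congr rfl fun j _ => ?_
        rw [hexpand, dotProduct_smul, dotProduct_sub, smul_eq_mul]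
        ring
    _ = _ := by simp only [Finset.sum_sub_distrib, hswap]; ring

theorem two_mul_sum_sub_mean_dotProduct_mulVec_coupled_le {N : ℕ} {f : (ι → ℝ) → ι → ℝ}
    {J : (ι → ℝ) → Matrix ι ι ℝ} {X : Set (ι → ℝ)}
    (hf : ∀ z ∈ X, HasFDerivAt f (J z).mulVecLin.toContinuousLinearMap z)
    (hX : Convex ℝ X) {θ : ℝ} {P : Matrix ι ι ℝ} (hP : Pᵀ = P) {B : Matrix ι κ ℝ}
    {C : Matrix κ ι ℝ}
    (hLMI : ∀ z ∈ X, ∀ v : ι → ℝ,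
      v ⬝ᵥ ((P * J z + (J z)ᵀ * P) *ᵥ v) ≤ θ * ((C *ᵥ v) ⬝ᵥ (C *ᵥ v)))
    (hPB : P * B = Cᵀ) {k : Fin N → Fin N → ℝ} (hk : ∀ i j, k i j = k j i)
    {x : Fin N → ι → ℝ} (hxX : ∀ i, x i ∈ X) :
    2 * ∑ i, (x i - (N : ℝ)⁻¹ • ∑ j, x j) ⬝ᵥ
        (P *ᵥ (f (x i) + B *ᵥ ∑ j, k i j • (C *ᵥ x j - C *ᵥ x i))) ≤
      θ * ∑ i, (C *ᵥ (x i - (N : ℝ)⁻¹ • ∑ j, x j)) ⬝ᵥ (C *ᵥ (x i - (N : ℝ)⁻¹ • ∑ j, x j)) -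
        ∑ i, ∑ j, k i j * ((C *ᵥ x i - C *ᵥ x j) ⬝ᵥ (C *ᵥ x i - C *ᵥ x j)) := by
  rcases Nat.eq_zero_or_pos N with rfl | hN
  · simp
  set xbar := (N : ℝ)⁻¹ • ∑ j, x j with hxbar_def
  obtain ⟨y, hy⟩ : ∃ y : Fin N → κ → ℝ, ∀ i, C *ᵥ (x i - xbar) = y i := ⟨_, fun _ => rfl⟩
  have hCx (i j : Fin N) : C *ᵥ x i - C *ᵥ x j = y i - y j := by
    rw [← hy, ← hy, ← mulVec_sub, ← mulVec_sub, sub_sub_sub_cancel_right]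
  have hxbar : xbar ∈ X := by
    rw [hxbar_def, Finset.smul_sum]
    refine hX.sum_mem (fun _ _ => by positivity) ?_ fun i _ => hxX i
    simp [Finset.card_univ, hN.ne']
  have hsplit (i : Fin N) :
      (x i - xbar) ⬝ᵥ (P *ᵥ (f (x i) + B *ᵥ ∑ j, k i j • (C *ᵥ x j - C *ᵥ x i))) =
        (x i - xbar) ⬝ᵥ (P *ᵥ (f (x i) - f xbar)) + (x i - xbar) ⬝ᵥ (P *ᵥ f xbar) +
          y i ⬝ᵥ ∑ j, k i j • (y j - y i) := by
    rw [mulVec_add, dotProduct_add, mulVec_mulVec, hPB, dotProduct_mulVec _ Cᵀ, vecMul_transpose,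
      hy, mulVec_sub P, dotProduct_sub]
    simp only [hCx]
    ring
  have hmean : ∑ i, (x i - xbar) ⬝ᵥ (P *ᵥ f xbar) = 0 := by
    rw [← sum_dotProduct, sum_sub_mean_eq_zero, zero_dotProduct]
  have hOFP : 2 * ∑ i, (x i - xbar) ⬝ᵥ (P *ᵥ (f (x i) - f xbar)) ≤ θ * ∑ i, y i ⬝ᵥ y i := by
    rw [Finset.mul_sum, Finset.mul_sum]
    refine Finset.sum_le_sum fun i _ => ?_
    simpa only [← hy] using two_mul_sub_dotProduct_mulVec_sub_le hf hX hP hLMI hxbar (hxX i)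
  have hcoupling := two_mul_sum_dotProduct_sum_smul_sub hk y
  simp only [hsplit, Finset.sum_add_distrib, hmean, add_zero]
  simp only [hCx, hy]
  linarith

end

namespace SimpleGraph

variable {V : Type*} [Fintype V] {G : SimpleGraph V} [DecidableRel G.Adj] {l : ℝ}

theorem Connected.mul_dotProduct_self_le_dotProduct_lapMatrix_mulVec [DecidableEq V]
    (hG : G.Connected)
    (hl : ∀ μ : ℝ, (∃ v : V → ℝ, v ≠ 0 ∧ G.lapMatrix ℝ *ᵥ v = μ • v) → μ = 0 ∨ l ≤ μ)
    {v : V → ℝ} (hv : ∑ i, v i = 0) :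
    l * (v ⬝ᵥ v) ≤ v ⬝ᵥ (G.lapMatrix ℝ *ᵥ v) := by
  refine (isHermitian_lapMatrix ℝ G).mul_dotProduct_self_le_of_forall_eigenvalue hl fun w hw => ?_
  obtain ⟨i₀⟩ := hG.nonempty
  have hconst : ∀ i, w i = w i₀ :=
    fun i => (lapMatrix_mulVec_eq_zero_iff_forall_reachable G).mp hw i i₀ (hG.preconnected i i₀)
  simp [dotProduct, hconst, ← Finset.mul_sum, hv]

theorem Connected.two_mul_mul_sum_dotProduct_self_le_sum_adj [DecidableEq V] (hG : G.Connected)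
    (hl : ∀ μ : ℝ, (∃ v : V → ℝ, v ≠ 0 ∧ G.lapMatrix ℝ *ᵥ v = μ • v) → μ = 0 ∨ l ≤ μ)
    {m : Type*} [Fintype m] {y : V → m → ℝ} (hy : ∑ i, y i = 0) :
    2 * l * ∑ i, y i ⬝ᵥ y i ≤
      ∑ i, ∑ j, if G.Adj i j then (y i - y j) ⬝ᵥ (y i - y j) else 0 := by
  have hcoord (α : m) : 2 * l * ∑ i, y i α * y i α ≤
      ∑ i, ∑ j, if G.Adj i j then (y i α - y j α) ^ 2 else 0 := by
    have := hG.mul_dotProduct_self_le_dotProduct_lapMatrix_mulVec hl (v := fun i => y i α)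
      (by simpa using congrFun hy α)
    rw [← toLinearMap₂'_apply', lapMatrix_toLinearMap₂'] at this
    simp only [dotProduct] at this
    linarith
  calc 2 * l * ∑ i, y i ⬝ᵥ y i = ∑ α, 2 * l * ∑ i, y i α * y i α := by
        simp only [dotProduct, ← Finset.mul_sum]; rw [Finset.sum_comm]
    _ ≤ ∑ α, ∑ i, ∑ j, if G.Adj i j then (y i α - y j α) ^ 2 else 0 :=
        Finset.sum_le_sum fun α _ => hcoord α
    _ = _ := by
        rw [Finset.sum_comm]
        refine Finset.sum_congr rfl fun i _ => ?_
        rw [Finset.sum_comm]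
        refine Finset.sum_congr rfl fun j _ => ?_
        split_ifs <;> simp [dotProduct, sq]

theorem hasDerivAt_sum_sum_one_div_two_mul_sub_sq {k : V → V → ℝ → ℝ} {γ q : V → V → ℝ} {t : ℝ}
    (hk : ∀ i j, G.Adj i j → HasDerivAt (k i j) (γ i j * q i j) t)
    (hγ : ∀ i j, G.Adj i j → 0 < γ i j) (hk_zero : ∀ i j, ¬ G.Adj i j → ∀ s, k i j s = 0)
    (c : ℝ) :
    HasDerivAt (fun s => ∑ i, ∑ j, 1 / (2 * γ i j) * (k i j s - if G.Adj i j then c else 0) ^ 2)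
      (∑ i, ∑ j, k i j t * q i j - c * ∑ i, ∑ j, if G.Adj i j then q i j else 0) t := by
  have hterm (i j : V) : HasDerivAt
      (fun s => 1 / (2 * γ i j) * (k i j s - if G.Adj i j then c else 0) ^ 2)
      ((k i j t - if G.Adj i j then c else 0) * q i j) t := by
    by_cases hij : G.Adj i j
    · simpa only [hij, if_true] using (hk i j hij).one_div_two_mul_mul_sub_sq (hγ i j hij).ne' c
    · simpa [hij, hk_zero i j hij] using hasDerivAt_const t (0 : ℝ)
  refine (HasDerivAt.fun_sum fun i _ => HasDerivAt.fun_sum fun j _ => hterm i j).congr_deriv ?_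
  simp only [sub_mul, ite_mul, zero_mul, Finset.sum_sub_distrib, Finset.mul_sum, mul_ite, mul_zero]

end SimpleGraph

theorem lyapunov_decrease_general
    {n p N : ℕ}
    (G : SimpleGraph (Fin N)) [DecidableRel G.Adj] (hG : G.Connected)
    (f : (Fin n → ℝ) → (Fin n → ℝ))
    (J : (Fin n → ℝ) → Matrix (Fin n) (Fin n) ℝ)
    (hf : ∀ z, HasFDerivAt f ((J z).mulVecLin.toContinuousLinearMap) z)
    (B : Matrix (Fin n) (Fin p) ℝ) (C : Matrix (Fin p) (Fin n) ℝ)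
    -- Assumption (OFP)
    (X : Set (Fin n → ℝ)) (hX : Convex ℝ X)
    (θ : ℝ) (hθ : 0 < θ)
    (P : Matrix (Fin n) (Fin n) ℝ) (hP : P.PosDef)
    (hLMI : ∀ z ∈ X, ∀ v : Fin n → ℝ,
      v ⬝ᵥ ((P * J z + (J z)ᵀ * P) *ᵥ v) ≤ θ * ((C *ᵥ v) ⬝ᵥ (C *ᵥ v)))
    (hPB : P * B = Cᵀ)
    -- `lam2` is the second-smallest eigenvalue of the Laplacian of `G`:
    (lam2 : ℝ)
    (hlam_eig : ∃ v : Fin N → ℝ, v ≠ 0 ∧ (G.lapMatrix ℝ) *ᵥ v = lam2 • v)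
    (hlam_min : ∀ μ : ℝ, (∃ v : Fin N → ℝ, v ≠ 0 ∧ (G.lapMatrix ℝ) *ᵥ v = μ • v) →
      μ = 0 ∨ lam2 ≤ μ)
    -- the constant `k*`
    (kstar : ℝ) (hkstar : 0 < 2 * kstar * lam2 - θ)
    -- a continuously differentiable solution of the adaptively coupled system on `[0,T)`
    (T : ℝ)
    (x : Fin N → ℝ → (Fin n → ℝ)) (k : Fin N → Fin N → ℝ → ℝ)
    (γ : Fin N → Fin N → ℝ)
    (hγpos : ∀ i j, G.Adj i j → 0 < γ i j)
    (hksym : ∀ i j t, k i j t = k j i t)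
    (hknonadj : ∀ i j, ¬ G.Adj i j → ∀ t, k i j t = 0)
    (hxode : ∀ i, ∀ t, 0 ≤ t → t < T →
      HasDerivAt (x i)
        (f (x i t) + B *ᵥ (∑ j, k i j t • (C *ᵥ x j t - C *ᵥ x i t))) t)
    (hkode : ∀ i j, G.Adj i j → ∀ t, 0 ≤ t → t < T →
      HasDerivAt (k i j)
        (γ i j * ((C *ᵥ x i t - C *ᵥ x j t) ⬝ᵥ (C *ᵥ x i t - C *ᵥ x j t))) t)
    (hXinv : ∀ i, ∀ t, 0 ≤ t → t < T → x i t ∈ X) :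
    -- conclusion: `V` is differentiable on `[0,T)` and `V̇ ≤ -(2 k* λ₂ - θ) ∑ᵢ |ỹᵢ|²`
    ∀ t, 0 ≤ t → t < T →
      ∃ d : ℝ,
        HasDerivAt (fun s =>
            (∑ i, ((x i s - (N : ℝ)⁻¹ • ∑ j, x j s) ⬝ᵥ
                (P *ᵥ (x i s - (N : ℝ)⁻¹ • ∑ j, x j s)))) +
            ∑ i, ∑ j, (1 / (2 * γ i j)) *
                (k i j s - (if G.Adj i j then kstar else 0)) ^ 2) d t ∧
        d ≤ -(2 * kstar * lam2 - θ) *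
          ∑ i, ((C *ᵥ (x i t - (N : ℝ)⁻¹ • ∑ j, x j t)) ⬝ᵥ
            (C *ᵥ (x i t - (N : ℝ)⁻¹ • ∑ j, x j t))) := by
  intro t ht0 htT
  have hPsymm : Pᵀ = P := by rw [← conjTranspose_eq_transpose_of_trivial]; exact hP.1
  refine ⟨_, (hasDerivAt_sum_sub_mean_dotProduct_mulVec hPsymm fun i => hxode i t ht0 htT).add
    (G.hasDerivAt_sum_sum_one_div_two_mul_sub_sq (fun i j hij => hkode i j hij t ht0 htT) hγpos
      hknonadj kstar), ?_⟩
  have hcoupled := two_mul_sum_sub_mean_dotProduct_mulVec_coupled_le (fun z _ => hf z) hX hPsymm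
    hLMI hPB (fun i j => hksym i j t) fun i => hXinv i t ht0 htT
  have hlap := hG.two_mul_mul_sum_dotProduct_self_le_sum_adj hlam_min
    (y := fun i => C *ᵥ (x i t - (N : ℝ)⁻¹ • ∑ j, x j t))
    (by rw [← mulVec_sum, sum_sub_mean_eq_zero, mulVec_zero])
  have hCx (i j : Fin N) : C *ᵥ (x i t - (N : ℝ)⁻¹ • ∑ j, x j t) -
      C *ᵥ (x j t - (N : ℝ)⁻¹ • ∑ j, x j t) = C *ᵥ x i t - C *ᵥ x j t := by
    rw [← mulVec_sub, ← mulVec_sub, sub_sub_sub_cancel_right]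
  simp only [hCx] at hlap
  have hkstar_pos : 0 < kstar := by
    obtain ⟨v, hv, hLv⟩ := hlam_eig
    nlinarith [(G.posSemidef_lapMatrix ℝ).nonneg_of_mulVec_eq_smul hv hLv]
  linarith [mul_le_mul_of_nonneg_left hlap hkstar_pos.le]

/-- Lyapunov decrease: for the adaptively coupled system under Assumption
(OFP), with `λ₂` the second-smallest Laplacian eigenvalue and any `k*` with
`2 k* λ₂ - θ > 0`, the function
`V(t) = ∑ᵢ x̃ᵢᵀ P x̃ᵢ + ∑ᵢ∑ⱼ (1/(2γᵢⱼ)) (kᵢⱼ - k*ᵢⱼ)²`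
is differentiable on `[0,T)` with `V̇(t) ≤ -(2 k* λ₂ - θ) ∑ᵢ |ỹᵢ(t)|²`. -/
theorem lyapunov_decrease
    {n p N : ℕ}
    (G : SimpleGraph (Fin N)) [DecidableRel G.Adj] (hG : G.Connected)
    (f : (Fin n → ℝ) → (Fin n → ℝ))
    (J : (Fin n → ℝ) → Matrix (Fin n) (Fin n) ℝ)
    (hf : ∀ z, HasFDerivAt f ((J z).mulVecLin.toContinuousLinearMap) z)
    (hJcont : Continuous J)
    (B : Matrix (Fin n) (Fin p) ℝ) (C : Matrix (Fin p) (Fin n) ℝ)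
    -- Assumption (OFP)
    (X : Set (Fin n → ℝ)) (hX : Convex ℝ X)
    (θ : ℝ) (hθ : 0 < θ)
    (P : Matrix (Fin n) (Fin n) ℝ) (hP : P.PosDef)
    (hLMI : ∀ z ∈ X, ∀ v : Fin n → ℝ,
      v ⬝ᵥ ((P * J z + (J z)ᵀ * P) *ᵥ v) ≤ θ * ((C *ᵥ v) ⬝ᵥ (C *ᵥ v)))
    (hPB : P * B = Cᵀ)
    -- `lam2` is the second-smallest eigenvalue of the Laplacian of `G`:
    (lam2 : ℝ)
    (hlam_eig : ∃ v : Fin N → ℝ, v ≠ 0 ∧ (G.lapMatrix ℝ) *ᵥ v = lam2 • v)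
    (hlam_min : ∀ μ : ℝ, (∃ v : Fin N → ℝ, v ≠ 0 ∧ (G.lapMatrix ℝ) *ᵥ v = μ • v) →
      μ = 0 ∨ lam2 ≤ μ)
    -- the constant `k*`
    (kstar : ℝ) (hkstar : 0 < 2 * kstar * lam2 - θ)
    -- a continuously differentiable solution of the adaptively coupled system on `[0,T)`
    (T : ℝ)
    (x : Fin N → ℝ → (Fin n → ℝ)) (k : Fin N → Fin N → ℝ → ℝ)
    (γ : Fin N → Fin N → ℝ)
    (hγsym : ∀ i j, γ i j = γ j i)
    (hγpos : ∀ i j, G.Adj i j → 0 < γ i j)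
    (hksym : ∀ i j t, k i j t = k j i t)
    (hknonadj : ∀ i j, ¬ G.Adj i j → ∀ t, k i j t = 0)
    (hxode : ∀ i, ∀ t, 0 ≤ t → t < T →
      HasDerivAt (x i)
        (f (x i t) + B *ᵥ (∑ j, k i j t • (C *ᵥ x j t - C *ᵥ x i t))) t)
    (hkode : ∀ i j, G.Adj i j → ∀ t, 0 ≤ t → t < T →
      HasDerivAt (k i j)
        (γ i j * ((C *ᵥ x i t - C *ᵥ x j t) ⬝ᵥ (C *ᵥ x i t - C *ᵥ x j t))) t)
    (hXinv : ∀ i, ∀ t, 0 ≤ t → t < T → x i t ∈ X) :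
    -- conclusion: `V` is differentiable on `[0,T)` and `V̇ ≤ -(2 k* λ₂ - θ) ∑ᵢ |ỹᵢ|²`
    ∀ t, 0 ≤ t → t < T →
      ∃ d : ℝ,
        HasDerivAt (fun s =>
            (∑ i, ((x i s - (N : ℝ)⁻¹ • ∑ j, x j s) ⬝ᵥ
                (P *ᵥ (x i s - (N : ℝ)⁻¹ • ∑ j, x j s)))) +
            ∑ i, ∑ j, (1 / (2 * γ i j)) *
                (k i j s - (if G.Adj i j then kstar else 0)) ^ 2) d t ∧
        d ≤ -(2 * kstar * lam2 - θ) *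
          ∑ i, ((C *ᵥ (x i t - (N : ℝ)⁻¹ • ∑ j, x j t)) ⬝ᵥ
            (C *ᵥ (x i t - (N : ℝ)⁻¹ • ∑ j, x j t))) :=
  lyapunov_decrease_general G hG f J hf B C X hX θ hθ P hP hLMI hPB lam2 hlam_eig hlam_min kstar
    hkstar T x k γ hγpos hksym hknonadj hxode hkode hXinv
end
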